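/- Let G be a connected cubic bipartite graph with parts X and Y, let P ⊆ X be a maximum packing among packings in X, let S be the set of vertices of Y at distance ≥ 3 from P, and let T ⊆ S be a maximum packing among packings contained in S. Then every vertex of S \ T has a neighbor at distance exactly 1 from T (i.e., a neighbor in N(T)), and hence |S| ≤ 4|T|. -/

import Mathlib

/-
Both halves rest on one exchange argument: if `A` is a maximum packing among those inside an
independent set `U`, then a vertex of `U` none of whose neighbours lies in `N(A)` is already in
`A`, since otherwise adding it would give a larger packing. Applied to `T` inside `S`, this gives
every `s ∈ S \ T` a neighbour in `N(T)`. Applied to `P` inside `X`, it shows that no `w ∈ N(T)`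
has two neighbours in `S \ T`: together with a neighbour in `T` they would be all three
neighbours of `w`, all in `S`, so `w ∈ P`, which puts that neighbour in `T` into `N(P)`, disjoint
from `S`. So `S \ T` injects into `N(T)`, and `|S| ≤ |T| + |N(T)| ≤ 4|T|`.
-/

open SimpleGraph Finset

/-- `X` is a dominating set of `G`: every vertex is in `X` or adjacent to a vertex of `X`. -/
def IsDominatingSet {V : Type*} (G : SimpleGraph V) (X : Finset V) : Prop :=
  ∀ v : V, v ∈ X ∨ ∃ u ∈ X, G.Adj u v

/-- The domination number of `G`. -/
noncomputable def domNum {V : Type*} (G : SimpleGraph V) : ℕ :=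
  sInf {n : ℕ | ∃ X : Finset V, IsDominatingSet G X ∧ X.card = n}

/-- `Y` is a packing of `G`: closed neighborhoods of distinct vertices of `Y` are disjoint
(equivalently, distinct vertices of `Y` are at distance at least 3). -/
def IsPackingSet {V : Type*} (G : SimpleGraph V) (Y : Finset V) : Prop :=
  ∀ u ∈ Y, ∀ v ∈ Y, u ≠ v →
    Disjoint (insert u (G.neighborSet u)) (insert v (G.neighborSet v))

/-- The packing number of `G`. -/
noncomputable def packNum {V : Type*} (G : SimpleGraph V) : ℕ :=
  sSup {n : ℕ | ∃ Y : Finset V, IsPackingSet G Y ∧ Y.card = n}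

/-- `(X, Y)` is a bipartition of `G`. -/
def IsBipartitionWith {V : Type*} (G : SimpleGraph V) (X Y : Finset V) : Prop :=
  Disjoint X Y ∧ (∀ v : V, v ∈ X ∨ v ∈ Y) ∧
    ∀ ⦃u v : V⦄, G.Adj u v → (u ∈ X ∧ v ∈ Y) ∨ (u ∈ Y ∧ v ∈ X)

/-- The neighborhood of a set of vertices: all vertices adjacent to some vertex of `P`. -/
def nbhdSet {V : Type*} [DecidableEq V] (G : SimpleGraph V) [Fintype V] [DecidableRel G.Adj]
    (P : Finset V) : Finset V :=
  P.biUnion (fun v => G.neighborFinset v)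

section

variable {V : Type*} {G : SimpleGraph V}

theorem IsBipartitionWith.isIndepSet_left {X Y : Finset V} (h : IsBipartitionWith G X Y) :
    G.IsIndepSet (X : Set V) := by
  intro u hu v hv _ huv
  rcases h.2.2 huv with ⟨-, hv'⟩ | ⟨hu', -⟩
  · exact Finset.disjoint_left.mp h.1 hv hv'
  · exact Finset.disjoint_left.mp h.1 hu hu'

theorem IsBipartitionWith.isIndepSet_right {X Y : Finset V} (h : IsBipartitionWith G X Y) :
    G.IsIndepSet (Y : Set V) := by
  intro u hu v hv _ huv
  rcases h.2.2 huv with ⟨hu', -⟩ | ⟨-, hv'⟩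
  · exact Finset.disjoint_left.mp h.1 hu' hu
  · exact Finset.disjoint_left.mp h.1 hv' hv

theorem IsBipartitionWith.mem_left_of_adj {X Y : Finset V} (h : IsBipartitionWith G X Y)
    {u v : V} (hu : u ∈ Y) (huv : G.Adj u v) : v ∈ X := by
  rcases h.2.2 huv with ⟨hu', -⟩ | ⟨-, hv⟩
  · exact absurd hu (Finset.disjoint_left.mp h.1 hu')
  · exact hv

theorem disjoint_insert_neighborSet {a b : V} (hne : a ≠ b) (hadj : ¬G.Adj a b)
    (hcommon : ∀ x, G.Adj a x → ¬G.Adj b x) :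
    Disjoint (insert a (G.neighborSet a)) (insert b (G.neighborSet b)) := by
  rw [Set.disjoint_left]
  rintro x (rfl | hax) (rfl | hbx)
  · exact hne rfl
  · exact hadj hbx.symm
  · exact hadj hax
  · exact hcommon x hax hbx

def IsMaxPackingIn (G : SimpleGraph V) (U A : Finset V) : Prop :=
  A ⊆ U ∧ IsPackingSet G A ∧ ∀ Q ⊆ U, IsPackingSet G Q → #Q ≤ #A

theorem IsPackingSet.insert [DecidableEq V] {A : Finset V} {a : V} (hA : IsPackingSet G A)
    (ha : ∀ b ∈ A, a ≠ b →
      Disjoint (insert a (G.neighborSet a)) (insert b (G.neighborSet b))) :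
    IsPackingSet G (insert a A) := by
  intro u hu v hv huv
  rcases Finset.mem_insert.mp hu with rfl | huA <;> rcases Finset.mem_insert.mp hv with rfl | hvA
  · exact absurd rfl huv
  · exact ha v hvA huv
  · exact (ha u huA huv.symm).symm
  · exact hA u huA v hvA huv

section nbhdSet

variable [Fintype V] [DecidableEq V] [DecidableRel G.Adj]

@[simp]
theorem mem_nbhdSet {A : Finset V} {x : V} : x ∈ nbhdSet G A ↔ ∃ a ∈ A, G.Adj a x := by
  simp [nbhdSet]

theorem card_nbhdSet_le {d : ℕ} (hdeg : ∀ v, G.degree v ≤ d) (A : Finset V) :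
    #(nbhdSet G A) ≤ d * #A := by
  rw [mul_comm]
  exact card_biUnion_le_card_mul _ _ _ fun v _ =>
    (card_neighborFinset_eq_degree G v).trans_le (hdeg v)

theorem IsMaxPackingIn.mem_of_forall_adj_notMem {U A : Finset V} (hA : IsMaxPackingIn G U A)
    (hU : G.IsIndepSet (U : Set V)) {a : V} (ha : a ∈ U)
    (hfar : ∀ x, G.Adj a x → x ∉ nbhdSet G A) : a ∈ A := by
  obtain ⟨hAU, hA, hmax⟩ := hA
  by_contra haA
  have hpack : IsPackingSet G (insert a A) := by
    refine hA.insert fun b hb hab => disjoint_insert_neighborSet hab ?_ ?_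
    · exact hU ha (hAU hb) hab
    · exact fun x hax hbx => hfar x hax (mem_nbhdSet.mpr ⟨b, hb, hbx⟩)
  have := hmax _ (Finset.insert_subset ha hAU) hpack
  rw [card_insert_of_notMem haA] at this
  omega

theorem eq_of_adj_of_mem_nbhdSet {X Y P S T : Finset V} (hbip : IsBipartitionWith G X Y)
    (hP : IsMaxPackingIn G X P) (hS : S ⊆ Y \ nbhdSet G P) (hTS : T ⊆ S) {w s₁ s₂ : V}
    (hdeg : G.degree w ≤ 3) (hw : w ∈ nbhdSet G T) (hs₁ : s₁ ∈ S \ T) (hs₂ : s₂ ∈ S \ T)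
    (h₁ : G.Adj s₁ w) (h₂ : G.Adj s₂ w) : s₁ = s₂ := by
  by_contra hne
  obtain ⟨t, htT, htw⟩ := mem_nbhdSet.mp hw
  have htS : t ∈ S := hTS htT
  have hts₁ : t ≠ s₁ := fun h => (mem_sdiff.mp hs₁).2 (h ▸ htT)
  have hts₂ : t ≠ s₂ := fun h => (mem_sdiff.mp hs₂).2 (h ▸ htT)
  have hnbhd : G.neighborFinset w = {t, s₁, s₂} := by
    refine (eq_of_subset_of_card_le ?_ ?_).symm
    · simp [insert_subset_iff, htw.symm, h₁.symm, h₂.symm]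
    · rw [card_neighborFinset_eq_degree, card_insert_of_notMem (by simp [hts₁, hts₂]),
        card_pair hne]
      exact hdeg
  have hwS : ∀ x, G.Adj w x → x ∈ S := by
    intro x hx
    rw [← mem_neighborFinset, hnbhd] at hx
    simp only [mem_insert, mem_singleton] at hx
    rcases hx with rfl | rfl | rfl
    exacts [htS, (mem_sdiff.mp hs₁).1, (mem_sdiff.mp hs₂).1]
  have hS' : ∀ {x}, x ∈ S → x ∈ Y ∧ x ∉ nbhdSet G P := fun hx => mem_sdiff.mp (hS hx)
  have hwP : w ∈ P :=
    hP.mem_of_forall_adj_notMem hbip.isIndepSet_left (hbip.mem_left_of_adj (hS' htS).1 htw)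
      fun x hx => (hS' (hwS x hx)).2
  exact (hS' htS).2 (mem_nbhdSet.mpr ⟨w, hwP, htw.symm⟩)

end nbhdSet

end

theorem second_level_packing_of_bicubic_general {V : Type*} [Fintype V] [DecidableEq V]
    (G : SimpleGraph V) [DecidableRel G.Adj]
    (hcubic : ∀ v : V, G.degree v = 3) (X Y : Finset V) (hbip : IsBipartitionWith G X Y)
    (P : Finset V) (hPX : P ⊆ X) (hP : IsPackingSet G P)
    (hPmax : ∀ Q : Finset V, Q ⊆ X → IsPackingSet G Q → Q.card ≤ P.card)
    (S : Finset V) (hS : S = Y \ nbhdSet G P)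
    (T : Finset V) (hTS : T ⊆ S) (hT : IsPackingSet G T)
    (hTmax : ∀ Q : Finset V, Q ⊆ S → IsPackingSet G Q → Q.card ≤ T.card) :
    (∀ s ∈ S \ T, ∃ w ∈ nbhdSet G T, G.Adj s w) ∧ S.card ≤ 4 * T.card := by
  have hSY : S ⊆ Y \ nbhdSet G P := hS.subset
  have hreach : ∀ s ∈ S \ T, ∃ w ∈ nbhdSet G T, G.Adj s w := by
    intro s hs
    by_contra! hfar
    have hSind : G.IsIndepSet (S : Set V) :=
      hbip.isIndepSet_right.mono fun x hx => (mem_sdiff.mp (hSY hx)).1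
    exact (mem_sdiff.mp hs).2 <| IsMaxPackingIn.mem_of_forall_adj_notMem ⟨hTS, hT, hTmax⟩ hSind
      (mem_sdiff.mp hs).1 fun x hsx hx => hfar x hx hsx
  refine ⟨hreach, ?_⟩
  have hinj : #(S \ T) ≤ #(nbhdSet G T) :=
    card_le_card_of_forall_subsingleton G.Adj hreach fun w hw _ h₁ _ h₂ =>
      eq_of_adj_of_mem_nbhdSet hbip ⟨hPX, hP, hPmax⟩ hSY hTS (hcubic w).le hw h₁.1 h₂.1 h₁.2 h₂.2
  have hN := card_nbhdSet_le (fun v => (hcubic v).le) T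
  have := card_sdiff_add_card_eq_card hTS
  omega

theorem second_level_packing_of_bicubic {V : Type*} [Fintype V] [DecidableEq V]
    (G : SimpleGraph V) [DecidableRel G.Adj] (hconn : G.Connected)
    (hcubic : ∀ v : V, G.degree v = 3) (X Y : Finset V) (hbip : IsBipartitionWith G X Y)
    (P : Finset V) (hPX : P ⊆ X) (hP : IsPackingSet G P)
    (hPmax : ∀ Q : Finset V, Q ⊆ X → IsPackingSet G Q → Q.card ≤ P.card)
    (S : Finset V) (hS : S = Y \ nbhdSet G P)
    (T : Finset V) (hTS : T ⊆ S) (hT : IsPackingSet G T)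
    (hTmax : ∀ Q : Finset V, Q ⊆ S → IsPackingSet G Q → Q.card ≤ T.card) :
    (∀ s ∈ S \ T, ∃ w ∈ nbhdSet G T, G.Adj s w) ∧ S.card ≤ 4 * T.card :=
  second_level_packing_of_bicubic_general G hcubic X Y hbip P hPX hP hPmax S hS T hTS hT hTmax
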